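/- arXiv:math/0110262 — 3 statements merged into one kernel-verified Lean document; each statement's English description precedes it below -/
import Mathlib

section
/- Let q be a prime power and E an elliptic curve over the finite field F_q. Then the sum, over the F_q-isomorphism classes [E'] of elliptic curves E' over F_q that become isomorphic to E over the algebraic closure, of 1/#Aut_{F_q}(E'), equals 1. -/
open WeierstrassCurve

/-- The `F̄_q/F_q`-forms of an elliptic curve `E` over `F_q`: elliptic curves over
`F_q` that become isomorphic to `E` over the algebraic closure. -/
def FormsOf {K : Type*} [Field K] (E : WeierstrassCurve K) : Type _ :=
  {W : WeierstrassCurve K // W.IsElliptic ∧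
    ∃ c : VariableChange (AlgebraicClosure K),
      c • W.baseChange (AlgebraicClosure K) = E.baseChange (AlgebraicClosure K)}

/-- `K`-isomorphism of forms: relation by an admissible change of variables over `K`. -/
def FormIsoRel {K : Type*} [Field K] (E : WeierstrassCurve K)
    (W W' : FormsOf E) : Prop :=
  ∃ c : VariableChange K, c • W.val = W'.val

/-- The group of `F_q`-automorphisms of an elliptic curve `W`, realized as the
changes of variables preserving `W`. -/
def AutEC {K : Type*} [CommRing K] (W : WeierstrassCurve K) : Type _ :=
  {c : VariableChange K // c • W = W}

/-!
`K`-isomorphism classes of forms of `E` are the orbits of the group `G(K)` of changes of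
variables acting on the set of forms, with stabilisers `Aut_K`; by orbit–stabiliser the sum is
`#Forms / #G(K)`, so it suffices that `#Forms = #G(K)`.

Let `L = K̄`, `Φ` the `q`-power Frobenius on `G(L)` and `A = Aut_L(E_L)`, a finite group. Count
`T = {c ∈ G(L) | Φ(c) c⁻¹ ∈ A}` in two ways. By Lang's theorem `c ↦ Φ(c) c⁻¹` maps `G(L)` onto
itself with fibres the cosets `c G(K)`, so `#T = #A · #G(K)`. And `c ↦ c⁻¹ • E_L` maps `T` onto
the Frobenius-fixed curves isomorphic to `E_L`, which are the base changes of the forms, with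
fibres the cosets `A c`, so `#T = #A · #Forms`.
-/

open Polynomial MulAction

theorem Nat.card_eq_card_mul_of_fiber_equiv {α β γ : Type*} (f : α → β)
    (h : ∀ b, Nonempty ({a // f a = b} ≃ γ)) : Nat.card α = Nat.card β * Nat.card γ := by
  rw [← Nat.card_prod]
  exact Nat.card_congr <| (Equiv.sigmaFiberEquiv f).symm.trans <|
    (Equiv.sigmaCongrRight fun b => (h b).some).trans (Equiv.sigmaEquivProd β γ)

theorem MulAction.nonempty_smul_eq_equiv_stabilizer {G X : Type*} [Group G] [MulAction G X]
    {x y : X} (h : ∃ g : G, g • y = x) : Nonempty ({g : G // g • y = x} ≃ stabilizer G x) := by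
  obtain ⟨g₁, rfl⟩ := h
  exact ⟨Equiv.subtypeEquiv (Equiv.mulRight g₁⁻¹) fun g => by
    rw [mem_stabilizer_iff, Equiv.coe_mulRight, mul_smul, inv_smul_smul]⟩

theorem MulAction.finsum_one_div_card_stabilizer {G X : Type*} [Group G] [MulAction G X]
    [Finite G] [Finite X] {r : X → X → Prop} (hr : ∀ a b, r a b ↔ ∃ g : G, g • a = b) :
    ∑ᶠ ω : Quot r, (1 : ℝ) / Nat.card (stabilizer G ω.out) = Nat.card X / Nat.card G := by
  obtain rfl : r = orbitRel G X := by
    funext a b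
    rw [hr, orbitRel_apply, eq_iff_iff, mem_orbit_symm]
    rfl
  let _ : Fintype (orbitRel.Quotient G X) := Fintype.ofFinite _
  have orbit_stabilizer (x : X) :
      (1 : ℝ) / Nat.card (stabilizer G x) = Nat.card (orbit G x) / Nat.card G := by
    have : Nonempty (orbit G x) := ⟨⟨x, mem_orbit_self x⟩⟩
    rw [← Nat.card_congr (orbitProdStabilizerEquivGroup G x), Nat.card_prod, Nat.cast_mul,
      div_mul_cancel_left₀ (Nat.cast_ne_zero.mpr Nat.card_pos.ne'), one_div]
  change ∑ᶠ ω : orbitRel.Quotient G X, (1 : ℝ) / Nat.card (stabilizer G ω.out) = _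
  rw [finsum_eq_sum_of_fintype, Nat.card_congr (selfEquivSigmaOrbits G X), Nat.card_sigma,
    Nat.cast_sum, Finset.sum_div]
  exact Finset.sum_congr rfl fun ω _ => orbit_stabilizer ω.out

section LangSteinberg

variable {G H : Type*} [Group G] [Group H] (Φ : G →* G) (ι : H →* G)

theorem nonempty_lang_fiber_equiv (hfix : ∀ g, Φ g = g ↔ g ∈ ι.range)
    {a c₀ : G} (hc₀ : Φ c₀ = a * c₀) : Nonempty ({c // Φ c * c⁻¹ = a} ≃ ι.range) :=
  ⟨Equiv.subtypeEquiv (Equiv.mulLeft c₀⁻¹) fun c => by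
    rw [Equiv.coe_mulLeft, ← hfix, map_mul, map_inv, hc₀, mul_inv_rev, mul_assoc, mul_right_inj,
      inv_mul_eq_iff_eq_mul, mul_inv_eq_iff_eq_mul]⟩

theorem card_lang_preimage (hι : Function.Injective ι) (hfix : ∀ g, Φ g = g ↔ g ∈ ι.range)
    (hlang : ∀ a, ∃ c, Φ c = a * c) (S : Set G) :
    Nat.card {c // Φ c * c⁻¹ ∈ S} = Nat.card S * Nat.card H := by
  refine Nat.card_eq_card_mul_of_fiber_equiv (fun c => (⟨Φ c.1 * c.1⁻¹, c.2⟩ : S)) fun a => ?_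
  obtain ⟨c₀, hc₀⟩ := hlang a
  obtain ⟨e⟩ := nonempty_lang_fiber_equiv Φ ι hfix hc₀
  exact ⟨((Equiv.subtypeEquivRight fun c => Subtype.ext_iff).trans
    (Equiv.subtypeSubtypeEquivSubtype fun {c} (h : Φ c * c⁻¹ = a) => h ▸ a.2)).trans
    (e.trans (MonoidHom.ofInjective hι).toEquiv.symm)⟩

variable {X : Type*} [MulAction G X]

theorem card_fixed_mem_orbit_eq_card (hι : Function.Injective ι)
    (hfix : ∀ g, Φ g = g ↔ g ∈ ι.range) (hlang : ∀ a, ∃ c, Φ c = a * c)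
    (σ : X → X) (hσ : ∀ (g : G) x, σ (g • x) = Φ g • σ x) {x₀ : X} (hx₀ : σ x₀ = x₀)
    [Finite (stabilizer G x₀)] :
    Nat.card {x // σ x = x ∧ ∃ g : G, g • x = x₀} = Nat.card H := by
  let A := stabilizer G x₀
  have hmem (c : G) : Φ c * c⁻¹ ∈ A ↔ σ (c⁻¹ • x₀) = c⁻¹ • x₀ := by
    rw [mem_stabilizer_iff, hσ, hx₀, map_inv, mul_smul, smul_eq_iff_eq_inv_smul, eq_comm]
  let π (c : {c // Φ c * c⁻¹ ∈ A}) : {x // σ x = x ∧ ∃ g : G, g • x = x₀} :=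
    ⟨c.1⁻¹ • x₀, (hmem c).1 c.2, c, smul_inv_smul _ _⟩
  have hfiber (y : {x // σ x = x ∧ ∃ g : G, g • x = x₀}) : Nonempty ({c // π c = y} ≃ A) := by
    obtain ⟨e⟩ := nonempty_smul_eq_equiv_stabilizer y.2.2
    exact ⟨((Equiv.subtypeEquivRight fun c => Subtype.ext_iff).trans
      (Equiv.subtypeSubtypeEquivSubtype fun {c} (h : c⁻¹ • x₀ = y.1) =>
        (hmem c).2 (h ▸ y.2.1))).trans
      ((Equiv.subtypeEquivRight fun c => by rw [inv_smul_eq_iff, eq_comm]).trans e)⟩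
  have hA : 0 < Nat.card A := Nat.card_pos
  refine Nat.eq_of_mul_eq_mul_right hA ?_
  rw [← Nat.card_eq_card_mul_of_fiber_equiv π hfiber, mul_comm]
  exact card_lang_preimage Φ ι hι hfix hlang A

end LangSteinberg

section Frobenius

variable {K : Type*} [Field K] [Fintype K] {L : Type*} [Field L] [Algebra K L]
  {φ : L →+* L} (hφ : ∀ x, φ x = x ^ Fintype.card K)

theorem FiniteField.exists_ringHom_eq_pow_card : ∃ φ : L →+* L, ∀ x, φ x = x ^ Fintype.card K := by
  obtain ⟨p, hp⟩ := CharP.exists K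
  have : CharP L p := charP_of_injective_algebraMap (algebraMap K L).injective p
  obtain ⟨n, hp, hcard⟩ := FiniteField.card K p
  have : ExpChar L p := ExpChar.prime hp
  exact ⟨iterateFrobenius L p n, fun x => by rw [iterateFrobenius_def, hcard]⟩

theorem FiniteField.pow_card_eq_self_iff_mem_range (x : L) :
    x ^ Fintype.card K = x ↔ x ∈ Set.range (algebraMap K L) := by
  have hne : (X ^ Fintype.card K - X : K[X]) ≠ 0 :=
    FiniteField.X_pow_card_sub_X_ne_zero K Fintype.one_lt_card
  have hsplits : Splits (X ^ Fintype.card K - X : K[X]) := by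
    rw [splits_iff_card_roots, FiniteField.roots_X_pow_card_sub_X, ← Finset.card_def,
      Finset.card_univ, FiniteField.X_pow_card_sub_X_natDegree_eq K Fintype.one_lt_card]
  have hroots : x ∈ ((X ^ Fintype.card K - X : K[X]).map (algebraMap K L)).roots ↔
      x ^ Fintype.card K = x := by
    rw [mem_roots (Polynomial.map_ne_zero hne), IsRoot, eval_map_algebraMap]
    simp [sub_eq_zero]
  rw [← hroots, hsplits.roots_map_of_injective (algebraMap K L).injective,
    FiniteField.roots_X_pow_card_sub_X]
  simp

include hφ

theorem frobenius_eq_self_iff (x : L) : φ x = x ↔ x ∈ Set.range (algebraMap K L) := by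
  rw [hφ]
  exact FiniteField.pow_card_eq_self_iff_mem_range x

theorem frobenius_comp_algebraMap : φ.comp (algebraMap K L) = algebraMap K L :=
  RingHom.ext fun x => (frobenius_eq_self_iff hφ _).2 ⟨x, rfl⟩

theorem WeierstrassCurve.map_frobenius_eq_self_iff (V : WeierstrassCurve L) :
    V.map φ = V ↔ ∃ W : WeierstrassCurve K, W.map (algebraMap K L) = V := by
  refine ⟨fun h => ?_, ?_⟩
  · obtain ⟨a₁, h₁⟩ := (frobenius_eq_self_iff hφ _).1 (congrArg a₁ h)
    obtain ⟨a₂, h₂⟩ := (frobenius_eq_self_iff hφ _).1 (congrArg a₂ h)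
    obtain ⟨a₃, h₃⟩ := (frobenius_eq_self_iff hφ _).1 (congrArg a₃ h)
    obtain ⟨a₄, h₄⟩ := (frobenius_eq_self_iff hφ _).1 (congrArg a₄ h)
    obtain ⟨a₆, h₆⟩ := (frobenius_eq_self_iff hφ _).1 (congrArg a₆ h)
    exact ⟨⟨a₁, a₂, a₃, a₄, a₆⟩, WeierstrassCurve.ext h₁ h₂ h₃ h₄ h₆⟩
  · rintro ⟨W, rfl⟩
    rw [map_map, frobenius_comp_algebraMap hφ]

theorem WeierstrassCurve.VariableChange.map_frobenius_eq_self_iff (c : VariableChange L) :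
    c.map φ = c ↔ ∃ k : VariableChange K, k.map (algebraMap K L) = c := by
  refine ⟨fun h => ?_, ?_⟩
  · obtain ⟨u, hu⟩ := (frobenius_eq_self_iff hφ _).1 (congrArg (fun c => (c.u : L)) h)
    obtain ⟨r, hr⟩ := (frobenius_eq_self_iff hφ _).1 (congrArg VariableChange.r h)
    obtain ⟨s, hs⟩ := (frobenius_eq_self_iff hφ _).1 (congrArg VariableChange.s h)
    obtain ⟨t, ht⟩ := (frobenius_eq_self_iff hφ _).1 (congrArg VariableChange.t h)
    have hu₀ : u ≠ 0 := by rintro rfl; exact c.u.ne_zero (by rw [← hu, map_zero])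
    exact ⟨⟨Units.mk0 u hu₀, r, s, t⟩, VariableChange.ext (Units.ext hu) hr hs ht⟩
  · rintro ⟨k, rfl⟩
    rw [VariableChange.map_map, frobenius_comp_algebraMap hφ]

end Frobenius

section AlgClosed

variable {L : Type*} [Field L] [IsAlgClosed L] {q : ℕ}

theorem IsAlgClosed.exists_pow_sub_self_eq (hq : 1 < q) (γ : L) : ∃ x : L, x ^ q - x = γ := by
  have hdeg : (X ^ q - X - C γ : L[X]).natDegree = q := by
    rw [natDegree_sub_C, FiniteField.X_pow_card_sub_X_natDegree_eq L hq]
  obtain ⟨x, hx⟩ := IsAlgClosed.exists_root (X ^ q - X - C γ : L[X])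
    (natDegree_pos_iff_degree_pos.mp (by omega)).ne'
  exact ⟨x, by simpa [sub_eq_zero] using hx⟩

theorem WeierstrassCurve.VariableChange.exists_map_eq_mul (hq : 1 < q) {φ : L →+* L}
    (hφ : ∀ x, φ x = x ^ q) (a : VariableChange L) : ∃ c : VariableChange L, c.map φ = a * c := by
  obtain ⟨z, hz⟩ := IsAlgClosed.exists_pow_nat_eq (a.u : L) (n := q - 1) (by omega)
  have hz0 : z ≠ 0 := by rintro rfl; exact a.u.ne_zero (by rw [← hz, zero_pow (by omega)])
  have hsolve (γ : L) : ∃ x, φ x = γ + x := by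
    obtain ⟨x, hx⟩ := IsAlgClosed.exists_pow_sub_self_eq hq γ
    exact ⟨x, by rw [hφ, ← hx]; ring⟩
  obtain ⟨r, hr⟩ := hsolve (a.r * z ^ 2)
  obtain ⟨s, hs⟩ := hsolve (z * a.s)
  obtain ⟨t, ht⟩ := hsolve (a.t * z ^ 3 + a.r * s * z ^ 2)
  refine ⟨⟨Units.mk0 z hz0, r, s, t⟩, VariableChange.ext (Units.ext ?_) hr hs ht⟩
  change φ z = a.u * z
  rw [hφ, ← hz, ← pow_succ, Nat.sub_add_cancel hq.le]

end AlgClosed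

theorem WeierstrassCurve.isElliptic_of_map {K L : Type*} [Field K] [CommRing L] [Nontrivial L]
    (f : K →+* L) (W : WeierstrassCurve K) [(W.map f).IsElliptic] : W.IsElliptic := by
  refine ⟨isUnit_iff_ne_zero.2 fun h => ?_⟩
  simpa [h] using (W.map f).isUnit_Δ

instance WeierstrassCurve.instFinite {R : Type*} [CommRing R] [Finite R] :
    Finite (WeierstrassCurve R) :=
  Finite.of_injective (fun W => (W.a₁, W.a₂, W.a₃, W.a₄, W.a₆)) fun W V h => by
    simp only [Prod.mk.injEq] at h
    exact WeierstrassCurve.ext h.1 h.2.1 h.2.2.1 h.2.2.2.1 h.2.2.2.2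

instance WeierstrassCurve.VariableChange.instFinite {R : Type*} [CommRing R] [Finite R] :
    Finite (VariableChange R) :=
  Finite.of_injective (fun c => (c.u, c.r, c.s, c.t)) fun c d h => by
    simp only [Prod.mk.injEq] at h
    exact VariableChange.ext h.1 h.2.1 h.2.2.1 h.2.2.2

section Automorphisms

variable {F : Type*} [Field F] (W : WeierstrassCurve F)

/-- The quartic for `r` is the `b₈`-relation minus `r` times the `b₆`-relation: being monic in
every characteristic, it bounds the automorphisms together with the other three relations. -/
theorem WeierstrassCurve.coord_relations_of_smul_eq_self [W.IsElliptic] {c : VariableChange F}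
    (h : c • W = W) :
    (c.u : F) ^ 12 = 1 ∧
      c.r ^ 4 - W.b₄ * c.r ^ 2 - (2 + (c.u : F) ^ 6) * W.b₆ * c.r - (1 - (c.u : F) ^ 8) * W.b₈
        = 0 ∧
      c.s ^ 2 + W.a₁ * c.s + ((c.u : F) ^ 2 * W.a₂ - W.a₂ - 3 * c.r) = 0 ∧
      c.t ^ 2 + (W.a₃ + c.r * W.a₁) * c.t +
        ((c.u : F) ^ 6 * W.a₆ - W.a₆ - c.r * W.a₄ - c.r ^ 2 * W.a₂ - c.r ^ 3) = 0 := by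
  have unscale (n : ℕ) {x y : F} (hxy : ((c.u⁻¹ : Fˣ) : F) ^ n * x = y) :
      x = (c.u : F) ^ n * y := by
    rw [← hxy, ← mul_assoc, ← mul_pow, Units.mul_inv, one_pow, one_mul]
  have hΔ := unscale 12 ((variableChange_Δ W c).symm.trans (congrArg Δ h))
  have hb₆ := unscale 6 ((variableChange_b₆ W c).symm.trans (congrArg b₆ h))
  have hb₈ := unscale 8 ((variableChange_b₈ W c).symm.trans (congrArg b₈ h))
  have ha₂ := unscale 2 ((variableChange_a₂ W c).symm.trans (congrArg a₂ h))
  have ha₆ := unscale 6 ((variableChange_a₆ W c).symm.trans (congrArg a₆ h))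
  refine ⟨?_, by linear_combination c.r * hb₆ - hb₈, by linear_combination -ha₂,
    by linear_combination -ha₆⟩
  exact (mul_eq_right₀ W.isUnit_Δ.ne_zero).mp hΔ.symm

theorem WeierstrassCurve.finite_stabilizer [W.IsElliptic] :
    Finite (stabilizer (VariableChange F) W) := by
  let P₀ : F[X] := X ^ 12 - 1
  let P₁ (u : F) : F[X] :=
    X ^ 4 - C W.b₄ * X ^ 2 - C ((2 + u ^ 6) * W.b₆) * X - C ((1 - u ^ 8) * W.b₈)
  let P₂ (u r : F) : F[X] := X ^ 2 + C W.a₁ * X + C (u ^ 2 * W.a₂ - W.a₂ - 3 * r)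
  let P₃ (u r : F) : F[X] := X ^ 2 + C (W.a₃ + r * W.a₁) * X +
    C (u ^ 6 * W.a₆ - W.a₆ - r * W.a₄ - r ^ 2 * W.a₂ - r ^ 3)
  have roots_finite (p : F[X]) (hp : p.Monic) : {x | p.IsRoot x}.Finite :=
    finite_setOfPred_isRoot hp.ne_zero
  let S := ⋃ u ∈ {u | P₀.IsRoot u}, ⋃ r ∈ {r | (P₁ u).IsRoot r},
    (fun st : F × F => (u, r, st)) '' ({s | (P₂ u r).IsRoot s} ×ˢ {t | (P₃ u r).IsRoot t})
  have hS : S.Finite :=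
    (roots_finite _ (by dsimp only [P₀]; monicity!)).biUnion fun u _ =>
      (roots_finite _ (by dsimp only [P₁]; monicity!)).biUnion fun r _ =>
        ((roots_finite _ (by dsimp only [P₂]; monicity!)).prod
          (roots_finite _ (by dsimp only [P₃]; monicity!))).image _
  have : Finite S := hS.to_subtype
  refine Finite.of_injective (fun c => (⟨((c.1.u : F), c.1.r, c.1.s, c.1.t), ?_⟩ : S)) ?_
  · obtain ⟨hu, hr, hs, ht⟩ := coord_relations_of_smul_eq_self W c.2
    simp only [S, Set.mem_iUnion, Set.mem_image, Set.mem_ofPred_eq]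
    exact ⟨c.1.u, by simpa [P₀, sub_eq_zero] using hu, c.1.r, by simpa [P₁] using hr,
      (c.1.s, c.1.t), ⟨by simpa [P₂] using hs, by simpa [P₃] using ht⟩, rfl⟩
  · intro c d h
    simp only [Subtype.mk.injEq, Prod.mk.injEq] at h
    exact Subtype.ext (VariableChange.ext (Units.ext h.1) h.2.1 h.2.2.1 h.2.2.2)

end Automorphisms

section Forms

variable {K : Type*} [Field K] (E : WeierstrassCurve K)

instance : MulAction (VariableChange K) (FormsOf E) where
  smul c W := ⟨c • W.1, by have := W.2.1; infer_instance, by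
    obtain ⟨d, hd⟩ := W.2.2
    refine ⟨d * (c.map (algebraMap K (AlgebraicClosure K)))⁻¹, ?_⟩
    rw [baseChange, ← map_variableChange, mul_smul, inv_smul_smul]
    exact hd⟩
  one_smul W := Subtype.ext (one_smul _ W.1)
  mul_smul c d W := Subtype.ext (mul_smul c d W.1)

instance [Finite K] : Finite (FormsOf E) := Subtype.finite

theorem formIsoRel_iff (W V : FormsOf E) :
    FormIsoRel E W V ↔ ∃ c : VariableChange K, c • W = V :=
  exists_congr fun c => (Subtype.ext_iff (a1 := c • W)).symm

theorem card_autEC_eq_card_stabilizer (W : FormsOf E) :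
    Nat.card (AutEC W.1) = Nat.card (stabilizer (VariableChange K) W) :=
  Nat.card_congr (Equiv.subtypeEquivRight fun c => (Subtype.ext_iff (a1 := c • W)).symm)

theorem card_formsOf [Fintype K] [E.IsElliptic] :
    Nat.card (FormsOf E) = Nat.card (VariableChange K) := by
  let L := AlgebraicClosure K
  obtain ⟨φ, hφ⟩ := FiniteField.exists_ringHom_eq_pow_card (K := K) (L := L)
  have := finite_stabilizer (E.map (algebraMap K L))
  rw [← card_fixed_mem_orbit_eq_card (VariableChange.mapHom φ)
    (VariableChange.mapHom (algebraMap K L))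
    (VariableChange.map_injective (algebraMap K L).injective)
    (VariableChange.map_frobenius_eq_self_iff hφ)
    (VariableChange.exists_map_eq_mul Fintype.one_lt_card hφ)
    (fun V => V.map φ) (fun g V => (map_variableChange V g φ).symm)
    ((map_frobenius_eq_self_iff hφ _).2 ⟨E, rfl⟩)]
  refine Nat.card_congr (Equiv.ofBijective (fun W => ⟨W.1.baseChange L,
    (map_frobenius_eq_self_iff hφ _).2 ⟨W.1, rfl⟩, W.2.2⟩) ⟨fun W V h => ?_, fun V => ?_⟩)
  · exact Subtype.ext (map_injective (algebraMap K L).injective (congrArg Subtype.val h))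
  · obtain ⟨V, hV, g, hg⟩ := V
    obtain ⟨W, rfl⟩ := (map_frobenius_eq_self_iff hφ V).1 hV
    have : (W.map (algebraMap K L)).IsElliptic := by
      rw [← inv_smul_eq_iff.2 hg.symm]
      infer_instance
    exact ⟨⟨W, isElliptic_of_map (algebraMap K L) W, g, hg⟩, rfl⟩

end Forms

/-- Proposition 2.2 of Howe's paper: for an elliptic curve `E` over a finite field
`F_q`, the sum of `1/#Aut_{F_q}(E')` over the `F̄_q/F_q`-forms `E'` of `E`, taken up
to `F_q`-isomorphism, equals `1`. -/
theorem sum_inv_aut_forms_eq_one {K : Type*} [Field K] [Fintype K]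
    (E : WeierstrassCurve K) [E.IsElliptic] :
    ∑ᶠ x : Quot (FormIsoRel E), (1 : ℝ) / Nat.card (AutEC x.out.val) = 1 := by
  simp_rw [card_autEC_eq_card_stabilizer]
  rw [MulAction.finsum_one_div_card_stabilizer (formIsoRel_iff E), card_formsOf,
    div_self (Nat.cast_ne_zero.2 Nat.card_pos.ne')]
end

section
/- Let A = (ℤ/dℤ) × (ℤ/nℤ) with m | d | n. The number of ordered pairs (P, Q) in A × A such that P has order m, Q has order n, and the 'determinant pairing' of P with (n/m)Q is a fixed primitive m-th root of unity (under the standard alternating pairing on A[m] ≅ (ℤ/mℤ)²), equals m·φ(n)·ψ(n)/ψ(n/d). -/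
/-!
For `Q` of order `n`, the point `Q' = (n/m) • Q` has order `m`. Identifying `A[m]` with
`(ℤ/m)²`, pairing with `Q'` is a linear form `z ↦ det(z, w)` with `w` of order `m`, hence
surjective, so exactly `m` points of `A[m]` pair with `Q'` to `ζ`, and each of them has order `m`
because `ζ` does. The count is therefore `m` times the number of elements of order `n` in
`ℤ/d × ℤ/n`. By the Chinese remainder theorem that number is multiplicative in `(d, n)`, and
for `d = p^f`, `n = p^(e+1)` it is the order of the group minus the size of its `p^e`-torsion,
`p^(f+e+1) - p^(min f e + e)`, which is `φ(n)ψ(n)/ψ(n/d)`.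
-/

/-- `ψ(n) = n ∏_{p ∣ n} (1 + 1/p)` as a rational number. -/
def psiQ (n : ℕ) : ℚ := n * ∏ p ∈ n.primeFactors, (1 + 1 / (p : ℚ))

/-- The canonical isomorphism `(d/m)·(ℤ/dℤ) ≅ ℤ/mℤ` (for `m ∣ d`), as the map sending
an element `x` of `ℤ/dℤ` killed by `m` to `x.val / (d/m)` in `ℤ/mℤ`. -/
def divDown (d m : ℕ) (x : ZMod d) : ZMod m := ((x.val / (d / m) : ℕ) : ZMod m)

/-- The standard alternating (determinant) pairing on the `m`-torsion of
`(ℤ/dℤ) × (ℤ/nℤ)` (for `m ∣ d ∣ n`), with values in `ℤ/mℤ`. -/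
def detPairing (d n m : ℕ) (P Q : ZMod d × ZMod n) : ZMod m :=
  divDown d m P.1 * divDown n m Q.2 - divDown n m P.2 * divDown d m Q.1

lemma ZMod.nsmul_eq_zero_of_dvd {d k : ℕ} (h : d ∣ k) (x : ZMod d) : k • x = 0 := by
  obtain ⟨c, rfl⟩ := h
  rw [nsmul_eq_mul, Nat.cast_mul, ZMod.natCast_self, zero_mul, zero_mul]

lemma ZMod.prod_nsmul_eq_zero {d n : ℕ} (h : d ∣ n) (Q : ZMod d × ZMod n) : n • Q = 0 :=
  Prod.ext (ZMod.nsmul_eq_zero_of_dvd h Q.1) (ZMod.nsmul_eq_zero_of_dvd dvd_rfl Q.2)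

lemma Nat.card_subtype_prod_eq_mul {α β : Type*} [Finite α] [Finite β] {p : β → Prop}
    {r : α → β → Prop} {k : ℕ} (h : ∀ b, p b → Nat.card {a // r a b} = k) :
    Nat.card {x : α × β // p x.2 ∧ r x.1 x.2} = Nat.card {b // p b} * k := by
  have : Fintype {b // p b} := Fintype.ofFinite _
  let e : {x : α × β // p x.2 ∧ r x.1 x.2} ≃ Σ b : {b // p b}, {a // r a b} :=
    { toFun x := ⟨⟨x.1.2, x.2.1⟩, ⟨x.1.1, x.2.2⟩⟩
      invFun y := ⟨(y.2, y.1), y.1.2, y.2.2⟩ }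
  rw [Nat.card_congr e, Nat.card_sigma, Finset.sum_congr rfl fun b _ => h b.1 b.2,
    Finset.sum_const, Finset.card_univ, smul_eq_mul, Nat.card_eq_fintype_card]

lemma psiQ_one : psiQ 1 = 1 := by simp [psiQ]

lemma psiQ_prime_pow {p k : ℕ} (hp : p.Prime) (hk : k ≠ 0) :
    psiQ (p ^ k) = p ^ k * (1 + 1 / (p : ℚ)) := by
  simp [psiQ, Nat.primeFactors_prime_pow hk hp]

lemma psiQ_mul {a b : ℕ} (hab : a.Coprime b) : psiQ (a * b) = psiQ a * psiQ b := by
  rcases eq_or_ne a 0 with rfl | ha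
  · simp [psiQ]
  rcases eq_or_ne b 0 with rfl | hb
  · simp [psiQ]
  rw [psiQ, psiQ, psiQ, Nat.primeFactors_mul ha hb, Finset.prod_union hab.disjoint_primeFactors]
  push_cast
  ring

lemma addOrderOf_prod_eq_mul_iff {G H : Type*} [AddMonoid G] [AddMonoid H] {a b : ℕ}
    (hab : a.Coprime b) (ha : a ≠ 0) (hb : b ≠ 0) {z : G × H} (h₁ : addOrderOf z.1 ∣ a)
    (h₂ : addOrderOf z.2 ∣ b) :
    addOrderOf z = a * b ↔ addOrderOf z.1 = a ∧ addOrderOf z.2 = b := by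
  rw [Prod.addOrderOf, (hab.of_dvd h₁ h₂).lcm_eq_mul]
  refine ⟨fun h => ⟨Nat.dvd_antisymm h₁ ?_, Nat.dvd_antisymm h₂ ?_⟩, fun h => by rw [h.1, h.2]⟩
  · refine Nat.dvd_of_mul_dvd_mul_right (Nat.pos_of_ne_zero hb) ?_
    rw [← h]
    exact Nat.mul_dvd_mul_left _ h₂
  · refine Nat.dvd_of_mul_dvd_mul_left (Nat.pos_of_ne_zero ha) ?_
    rw [← h]
    exact Nat.mul_dvd_mul_right h₁ _

lemma card_addOrderOf_prod_eq_mul {G H : Type*} [AddMonoid G] [AddMonoid H] {a b : ℕ}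
    (hab : a.Coprime b) (ha : a ≠ 0) (hb : b ≠ 0) (hG : ∀ x : G, a • x = 0)
    (hH : ∀ y : H, b • y = 0) :
    Nat.card {z : G × H // addOrderOf z = a * b} =
      Nat.card {x : G // addOrderOf x = a} * Nat.card {y : H // addOrderOf y = b} := by
  rw [← Nat.card_prod, ← Nat.card_congr Equiv.subtypeProdEquivProd]
  exact Nat.card_congr <| Equiv.subtypeEquivRight fun z => addOrderOf_prod_eq_mul_iff hab ha hb
    (addOrderOf_dvd_of_nsmul_eq_zero (hG z.1)) (addOrderOf_dvd_of_nsmul_eq_zero (hH z.2))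

lemma card_addOrderOf_zmod_prod_mul {d₁ n₁ d₂ n₂ : ℕ} (h₁ : d₁ ∣ n₁) (h₂ : d₂ ∣ n₂)
    (hn : n₁.Coprime n₂) (hn₁ : n₁ ≠ 0) (hn₂ : n₂ ≠ 0) :
    Nat.card {Q : ZMod (d₁ * d₂) × ZMod (n₁ * n₂) // addOrderOf Q = n₁ * n₂} =
      Nat.card {Q : ZMod d₁ × ZMod n₁ // addOrderOf Q = n₁} *
        Nat.card {Q : ZMod d₂ × ZMod n₂ // addOrderOf Q = n₂} := by
  let e := ((ZMod.chineseRemainder (hn.of_dvd h₁ h₂)).toAddEquiv.prodCongr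
    (ZMod.chineseRemainder hn).toAddEquiv).trans (AddEquiv.prodProdProdComm _ _ _ _)
  rw [← card_addOrderOf_prod_eq_mul hn hn₁ hn₂ (ZMod.prod_nsmul_eq_zero h₁)
    (ZMod.prod_nsmul_eq_zero h₂)]
  exact Nat.card_congr <| e.toEquiv.subtypeEquiv fun Q => by
    rw [← e.addOrderOf_eq Q]
    rfl

lemma ZMod.card_nsmul_eq_zero {d : ℕ} [NeZero d] (k : ℕ) :
    Nat.card {x : ZMod d // k • x = 0} = d.gcd k := by
  simpa using IsAddCyclic.card_nsmulAddMonoidHom_ker (ZMod d) k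

lemma ZMod.card_prod_nsmul_eq_zero (d n k : ℕ) [NeZero d] [NeZero n] :
    Nat.card {Q : ZMod d × ZMod n // k • Q = 0} = d.gcd k * n.gcd k := by
  rw [← ZMod.card_nsmul_eq_zero, ← ZMod.card_nsmul_eq_zero, ← Nat.card_prod,
    ← Nat.card_congr Equiv.subtypeProdEquivProd]
  exact Nat.card_congr <| Equiv.subtypeEquivRight fun Q => Prod.ext_iff

lemma card_addOrderOf_eq_prime_pow_add_card_nsmul_eq_zero {G : Type*} [AddGroup G] [Finite G]
    {p e : ℕ} [hp : Fact p.Prime] (hG : ∀ x : G, p ^ (e + 1) • x = 0) :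
    Nat.card {x : G // addOrderOf x = p ^ (e + 1)} + Nat.card {x : G // p ^ e • x = 0} =
      Nat.card G := by
  have hiff : ∀ x : G, addOrderOf x = p ^ (e + 1) ↔ ¬ p ^ e • x = 0 := fun x =>
    ⟨fun h h' => by
      have := addOrderOf_dvd_of_nsmul_eq_zero h'
      rw [h, Nat.pow_dvd_pow_iff_le_right hp.out.one_lt] at this
      omega,
    fun h => addOrderOf_eq_prime_pow h (hG x)⟩
  rw [Nat.card_congr (Equiv.subtypeEquivRight hiff), add_comm]
  exact Set.ncard_add_ncard_compl {x : G | p ^ e • x = 0}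

lemma card_addOrderOf_zmod_prod_prime_pow {p f e : ℕ} (hp : p.Prime) (hf : f ≤ e + 1) :
    (Nat.card {Q : ZMod (p ^ f) × ZMod (p ^ (e + 1)) // addOrderOf Q = p ^ (e + 1)} : ℚ) =
      (p ^ (e + 1)).totient * psiQ (p ^ (e + 1)) / psiQ (p ^ (e + 1) / p ^ f) := by
  have : Fact p.Prime := ⟨hp⟩
  have : NeZero p := ⟨hp.ne_zero⟩
  have hsum := card_addOrderOf_eq_prime_pow_add_card_nsmul_eq_zero
    (ZMod.prod_nsmul_eq_zero (pow_dvd_pow p hf))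
  rw [ZMod.card_prod_nsmul_eq_zero, Nat.card_prod, Nat.card_zmod, Nat.card_zmod,
    Nat.gcd_eq_right (pow_dvd_pow p e.le_succ)] at hsum
  have hcard :
      (Nat.card {Q : ZMod (p ^ f) × ZMod (p ^ (e + 1)) // addOrderOf Q = p ^ (e + 1)} : ℚ) =
        p ^ f * p ^ (e + 1) - (p ^ f).gcd (p ^ e) * p ^ e :=
    eq_sub_of_add_eq (by exact_mod_cast hsum)
  rw [hcard, Nat.totient_prime_pow_succ hp, psiQ_prime_pow hp e.succ_ne_zero]
  have hp₀ : (p : ℚ) ≠ 0 := by exact_mod_cast hp.ne_zero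
  push_cast [hp.one_le]
  rcases hf.lt_or_eq with hf | rfl
  · rw [Nat.gcd_eq_left (pow_dvd_pow p (Nat.le_of_lt_succ hf)), Nat.pow_div hf.le hp.pos,
      psiQ_prime_pow hp (Nat.sub_ne_zero_of_lt hf)]
    have hpf : (p : ℚ) ^ (e + 1 - f) * p ^ f = p ^ (e + 1) := by
      rw [← pow_add, Nat.sub_add_cancel hf.le]
    have : (1 + 1 / (p : ℚ)) ≠ 0 := by positivity
    field_simp
    push_cast
    linear_combination (p ^ e * (p - 1) : ℚ) * hpf
  · rw [Nat.gcd_eq_right (pow_dvd_pow p e.le_succ), Nat.div_self (pow_pos hp.pos _), psiQ_one]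
    field_simp
    push_cast
    ring

theorem card_addOrderOf_zmod_prod {n : ℕ} (hn : n ≠ 0) {d : ℕ} (hd : d ∣ n) :
    (Nat.card {Q : ZMod d × ZMod n // addOrderOf Q = n} : ℚ) =
      n.totient * psiQ n / psiQ (n / d) := by
  induction n using Nat.recOnPosPrimePosCoprime generalizing d with
  | zero => exact absurd rfl hn
  | one =>
    obtain rfl := Nat.dvd_one.mp hd
    simp [psiQ_one]
  | prime_pow p k hp hk =>
    obtain ⟨f, hf, rfl⟩ := (Nat.dvd_prime_pow hp).mp hd
    obtain ⟨e, rfl⟩ := Nat.exists_eq_succ_of_ne_zero hk.ne'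
    exact card_addOrderOf_zmod_prod_prime_pow hp hf
  | coprime a b ha hb hab iha ihb =>
    obtain ⟨d₁, d₂, h₁, h₂, rfl⟩ := Nat.dvd_mul.mp hd
    rw [card_addOrderOf_zmod_prod_mul h₁ h₂ hab (by omega) (by omega), Nat.cast_mul,
      iha (by omega) h₁, ihb (by omega) h₂, ← Nat.div_mul_div_comm h₁ h₂, Nat.totient_mul hab,
      psiQ_mul hab, psiQ_mul ((hab.coprime_div_left h₁).coprime_div_right h₂), Nat.cast_mul,
      mul_div_mul_comm]
    ring

section DivUp

variable {m d : ℕ} (h : m ∣ d)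

def divUpHom : ZMod m →+ ZMod d :=
  ZMod.lift m ⟨zmultiplesHom _ ((d / m : ℕ) : ZMod d), by
    rw [zmultiplesHom_apply, natCast_zsmul, nsmul_eq_mul, ← Nat.cast_mul, Nat.mul_div_cancel' h,
      ZMod.natCast_self]⟩

lemma divUpHom_apply [NeZero m] (x : ZMod m) :
    divUpHom h x = ((x.val * (d / m) : ℕ) : ZMod d) := by
  conv_lhs => rw [← ZMod.intCast_zmod_cast x, divUpHom, ZMod.lift_coe]
  rw [ZMod.cast_eq_val, zmultiplesHom_apply, natCast_zsmul, nsmul_eq_mul, Nat.cast_mul]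

variable [NeZero d]

lemma divDown_divUpHom (x : ZMod m) : divDown d m (divUpHom h x) = x := by
  have : NeZero m := ⟨ne_zero_of_dvd_ne_zero (NeZero.ne d) h⟩
  have hq : 0 < d / m := Nat.div_pos (Nat.le_of_dvd (NeZero.pos d) h) (NeZero.pos m)
  have hlt : x.val * (d / m) < d :=
    calc x.val * (d / m) < m * (d / m) := Nat.mul_lt_mul_of_pos_right x.val_lt hq
      _ = d := Nat.mul_div_cancel' h
  rw [divUpHom_apply, divDown, ZMod.val_natCast_of_lt hlt, Nat.mul_div_cancel _ hq,
    ZMod.natCast_zmod_val]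

lemma divUpHom_injective : Function.Injective (divUpHom h) :=
  Function.LeftInverse.injective (divDown_divUpHom h)

lemma range_divUpHom : (divUpHom h).range = (nsmulAddMonoidHom m : ZMod d →+ ZMod d).ker := by
  refine AddSubgroup.eq_of_le_of_card_ge ?_ ?_
  · rintro _ ⟨x, rfl⟩
    rw [AddMonoidHom.mem_ker, nsmulAddMonoidHom_apply, ← map_nsmul, nsmul_eq_mul,
      ZMod.natCast_self, zero_mul, map_zero]
  · rw [IsAddCyclic.card_nsmulAddMonoidHom_ker, Nat.card_zmod, Nat.gcd_eq_right h,
      ← Nat.card_congr (AddMonoidHom.ofInjective (divUpHom_injective h)).toEquiv, Nat.card_zmod]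

lemma exists_divUpHom_eq {y : ZMod d} (hy : m • y = 0) : ∃ x, divUpHom h x = y := by
  rw [← AddMonoidHom.mem_range, range_divUpHom]
  exact hy

end DivUp

section DetForm

variable {m : ℕ}

def detWith (w : ZMod m × ZMod m) : ZMod m × ZMod m →+ ZMod m :=
  AddMonoidHom.mk' (fun z => z.1 * w.2 - z.2 * w.1) fun a b => by
    simp only [Prod.fst_add, Prod.snd_add]; ring

lemma detWith_apply (w z : ZMod m × ZMod m) : detWith w z = z.1 * w.2 - z.2 * w.1 := rfl

variable [NeZero m] {w : ZMod m × ZMod m}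

lemma detWith_surjective (hw : addOrderOf w = m) : Function.Surjective (detWith w) := by
  rw [← AddMonoidHom.range_eq_top]
  apply AddSubgroup.eq_top_of_card_eq
  set R := (detWith w).range
  have h₁ : w.1 ∈ R := ⟨(0, -1), by simp [detWith_apply]⟩
  have h₂ : w.2 ∈ R := ⟨(1, 0), by simp [detWith_apply]⟩
  have hm : m ∣ Nat.card R := by
    have := Nat.lcm_dvd (R.addOrderOf_dvd_natCard h₁) (R.addOrderOf_dvd_natCard h₂)
    rwa [← Prod.addOrderOf, hw] at this
  have hR : Nat.card R ∣ m := by simpa using AddSubgroup.card_addSubgroup_dvd_card R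
  rw [Nat.dvd_antisymm hR hm, Nat.card_zmod]

lemma card_detWith_fiber (hw : addOrderOf w = m) (ζ : ZMod m) :
    Nat.card {z // detWith w z = ζ} = m := by
  have hsurj := detWith_surjective hw
  have hker := (detWith w).ker.card_mul_index
  rw [AddSubgroup.index_ker, AddMonoidHom.range_eq_top.mpr hsurj, AddSubgroup.card_top,
    Nat.card_prod, Nat.card_zmod] at hker
  exact (Nat.card_congr (AddMonoidHom.fiberEquivKerOfSurjective hsurj ζ)).trans
    (Nat.eq_of_mul_eq_mul_right (NeZero.pos m) hker)

end DetForm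

section Fiber

variable {m d n : ℕ} (hmd : m ∣ d) (hmn : m ∣ n)

def torsionParam : ZMod m × ZMod m →+ ZMod d × ZMod n :=
  (divUpHom hmd).prodMap (divUpHom hmn)

variable [NeZero d] [NeZero n]

lemma torsionParam_injective : Function.Injective (torsionParam hmd hmn) :=
  (divUpHom_injective hmd).prodMap (divUpHom_injective hmn)

lemma exists_torsionParam_eq {P : ZMod d × ZMod n} (hP : m • P = 0) :
    ∃ z, torsionParam hmd hmn z = P := by
  obtain ⟨x, hx⟩ := exists_divUpHom_eq hmd (congrArg Prod.fst hP)
  obtain ⟨y, hy⟩ := exists_divUpHom_eq hmn (congrArg Prod.snd hP)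
  exact ⟨(x, y), Prod.ext hx hy⟩

lemma detPairing_torsionParam (z : ZMod m × ZMod m) (Q : ZMod d × ZMod n) :
    detPairing d n m (torsionParam hmd hmn z) Q =
      detWith (divDown d m Q.1, divDown n m Q.2) z := by
  simp only [detPairing, torsionParam, AddMonoidHom.coe_prodMap, Prod.map_fst, Prod.map_snd,
    divDown_divUpHom, detWith_apply]

end Fiber

lemma card_detPairing_fiber {m d n : ℕ} [NeZero d] [NeZero n] (hmd : m ∣ d) (hmn : m ∣ n)
    {ζ : ZMod m} (hζ : addOrderOf ζ = m) {Q : ZMod d × ZMod n} (hQ : addOrderOf Q = m) :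
    Nat.card {P : ZMod d × ZMod n // addOrderOf P = m ∧ detPairing d n m P Q = ζ} = m := by
  have : NeZero m := ⟨ne_zero_of_dvd_ne_zero (NeZero.ne d) hmd⟩
  set E := torsionParam (d := d) (n := n) hmd hmn
  have hE : ∀ z, addOrderOf (E z) = addOrderOf z :=
    addOrderOf_injective E (torsionParam_injective hmd hmn)
  obtain ⟨w, rfl⟩ := exists_torsionParam_eq hmd hmn (hQ ▸ addOrderOf_nsmul_eq_zero Q)
  have hw : (divDown d m (E w).1, divDown n m (E w).2) = w :=
    Prod.ext (divDown_divUpHom hmd w.1) (divDown_divUpHom hmn w.2)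
  have hord : ∀ z : ZMod m × ZMod m, detWith w z = ζ → addOrderOf (E z) = m := fun z hz =>
    hE z ▸ Nat.dvd_antisymm
      (addOrderOf_dvd_of_nsmul_eq_zero (ZMod.prod_nsmul_eq_zero dvd_rfl z))
      (hζ.symm.dvd.trans (hz ▸ addOrderOf_map_dvd (detWith w) z))
  have hpair : ∀ z, detPairing d n m (E z) (E w) = detWith w z := fun z => by
    rw [detPairing_torsionParam, hw]
  refine Eq.trans ?_ (card_detWith_fiber (hE w ▸ hQ) ζ)
  refine (Nat.card_congr <| Equiv.ofBijective
    (fun z => ⟨E z.1, hord z.1 z.2, (hpair z.1).trans z.2⟩) ⟨?_, ?_⟩).symm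
  · exact fun z₁ z₂ h => Subtype.ext (torsionParam_injective hmd hmn (congrArg Subtype.val h))
  · rintro ⟨P, hP, hPζ⟩
    obtain ⟨z, rfl⟩ := exists_torsionParam_eq hmd hmn (hP ▸ addOrderOf_nsmul_eq_zero P)
    exact ⟨⟨z, (hpair z).symm.trans hPζ⟩, rfl⟩

theorem card_pairs_detPairing_general (m d n : ℕ) (hmd : m ∣ d) (hdn : d ∣ n)
    (hn : 0 < n) (ζ : ZMod m) (hζ : addOrderOf ζ = m) :
    (Nat.card {PQ : (ZMod d × ZMod n) × (ZMod d × ZMod n) //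
        addOrderOf PQ.1 = m ∧ addOrderOf PQ.2 = n ∧
          detPairing d n m PQ.1 ((n / m) • PQ.2) = ζ} : ℚ) =
      m * Nat.totient n * psiQ n / psiQ (n / d) := by
  have : NeZero n := ⟨hn.ne'⟩
  have : NeZero d := ⟨ne_zero_of_dvd_ne_zero hn.ne' hdn⟩
  have hmn : m ∣ n := hmd.trans hdn
  have hfiber : ∀ Q : ZMod d × ZMod n, addOrderOf Q = n →
      Nat.card {P // addOrderOf P = m ∧ detPairing d n m P ((n / m) • Q) = ζ} = m :=
    fun Q hQ => card_detPairing_fiber hmd hmn hζ <| by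
      rw [addOrderOf_nsmul, hQ, Nat.gcd_eq_right (Nat.div_dvd_of_dvd hmn),
        Nat.div_div_self hmn hn.ne']
  rw [Nat.card_congr (Equiv.subtypeEquivRight fun _ => and_left_comm),
    Nat.card_subtype_prod_eq_mul hfiber, Nat.cast_mul, card_addOrderOf_zmod_prod hn.ne' hdn]
  ring

/-- In `A = (ℤ/dℤ) × (ℤ/nℤ)` with `m ∣ d ∣ n`, the number of pairs `(P, Q)` with
`P` of order `m`, `Q` of order `n`, and determinant pairing of `P` with `(n/m)Q`
equal to a fixed generator `ζ` of `ℤ/mℤ`, is `m·φ(n)·ψ(n)/ψ(n/d)`. -/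
theorem card_pairs_detPairing (m d n : ℕ) (hm : 0 < m) (hmd : m ∣ d) (hdn : d ∣ n)
    (hn : 0 < n) (ζ : ZMod m) (hζ : addOrderOf ζ = m) :
    (Nat.card {PQ : (ZMod d × ZMod n) × (ZMod d × ZMod n) //
        addOrderOf PQ.1 = m ∧ addOrderOf PQ.2 = n ∧
          detPairing d n m PQ.1 ((n / m) • PQ.2) = ζ} : ℚ) =
      m * Nat.totient n * psiQ n / psiQ (n / d) :=
  card_pairs_detPairing_general m d n hmd hdn hn ζ hζ
end

section
/- Fix a positive integer q and a prime ℓ, and a positive integer a; set b = ⌊a/2⌋, c = ⌈a/2⌉. With ŵ as defined (ŵ(m,n) = q·ψ(n/m)/(m·φ(n)·ψ(n))·∏_{p | (gcd(n,q-1)/m)}(1-1/p) for m | gcd(n,q−1), else 0), the sum v̂(ℓ^a) = ∑_{d | gcd(ℓ^c, q-1)} ŵ(d, ℓ^a/gcd(d, ℓ^b)) satisfies: v̂(ℓ^a)/q = 1/(ℓ^{a-1}(ℓ-1)) if q ≢ 1 mod ℓ^c, and v̂(ℓ^a)/q = (ℓ^{b+1}+ℓ^b-1)/(ℓ^{a+b-1}(ℓ^2-1))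 if q ≡ 1 mod ℓ^c. -/
/-- The approximation `ŵ(m,n)` of Howe's paper: for `m ∣ gcd(n, q-1)`,
`ŵ(m,n) = q·ψ(n/m)/(m·φ(n)·ψ(n)) · ∏_{p ∣ gcd(n,q-1)/m} (1 - 1/p)`, and `0` otherwise. -/
def wHat (q m n : ℕ) : ℚ :=
  if m ∣ Nat.gcd n (q - 1) then
    q * psiQ (n / m) / (m * Nat.totient n * psiQ n) *
      ∏ p ∈ (Nat.gcd n (q - 1) / m).primeFactors, (1 - 1 / (p : ℚ))
  else 0

/-- The approximation `v̂` on prime powers: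
`v̂(ℓ^a) = ∑_{d ∣ gcd(ℓ^c, q-1)} ŵ(d, ℓ^a / gcd(d, ℓ^b))` with `b = ⌊a/2⌋`, `c = ⌈a/2⌉`. -/
def vHat (q ℓ a : ℕ) : ℚ :=
  ∑ d ∈ (Nat.gcd (ℓ ^ ((a + 1) / 2)) (q - 1)).divisors,
    wHat q d (ℓ ^ a / Nat.gcd d (ℓ ^ (a / 2)))

/-! Writing `v = v_ℓ(q - 1)`, the divisors in the sum are `ℓ^i` for `i ≤ e = min(c, v)`.
For `i < e` the factor `1 - 1/ℓ` cancels against `φ(ℓ^k)ψ(ℓ^k) = ℓ^{2k}(1 - ℓ⁻²)`, and the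
term is exactly `q ℓ^{-(a+i)}`; so `v̂(ℓ^a)/q` is a geometric sum plus the term `i = e`.
If `v < c` that last term is `ℓ^{-(a+v)}/(1 - 1/ℓ)`, which completes the geometric sum to
`ℓ^{-a}/(1 - 1/ℓ)`. If `c ≤ v` it is `ŵ(ℓ^c, ℓ^c)/q = ℓ^{-3c}/(1 - ℓ⁻²)`, and the sum takes the
stated form because `a = b + c` with `c - b ∈ {0, 1}`. -/

lemma psiQ_prime_pow_s14 {ℓ k : ℕ} (hℓ : ℓ.Prime) (hk : k ≠ 0) :
    psiQ (ℓ ^ k) = (ℓ : ℚ) ^ k * (1 + (ℓ : ℚ)⁻¹) := by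
  rw [psiQ, Nat.primeFactors_prime_pow hk hℓ, Finset.prod_singleton]
  push_cast
  rw [one_div]

lemma totient_mul_psiQ_prime_pow {ℓ k : ℕ} (hℓ : ℓ.Prime) (hk : k ≠ 0) :
    (Nat.totient (ℓ ^ k) : ℚ) * psiQ (ℓ ^ k) = (ℓ : ℚ) ^ (2 * k) * (1 - (ℓ : ℚ)⁻¹ ^ 2) := by
  obtain ⟨j, rfl⟩ := Nat.exists_eq_add_one_of_ne_zero hk
  have hℓ0 : (ℓ : ℚ) ≠ 0 := by exact_mod_cast hℓ.ne_zero
  rw [Nat.totient_prime_pow_succ hℓ, psiQ_prime_pow_s14 hℓ hk]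
  push_cast [hℓ.one_le]
  field_simp
  ring

lemma gcd_prime_pow_eq_pow_min {ℓ n : ℕ} (hℓ : ℓ.Prime) (hn : n ≠ 0) (k : ℕ) :
    Nat.gcd (ℓ ^ k) n = ℓ ^ min k (n.factorization ℓ) := by
  obtain ⟨j, -, hj⟩ := (Nat.dvd_prime_pow hℓ).mp (Nat.gcd_dvd_left (ℓ ^ k) n)
  have hfac := Nat.factorization_gcd (pow_ne_zero k hℓ.ne_zero) hn
  rw [hj] at hfac ⊢
  have := congrArg (· ℓ) hfac
  simp only [hℓ.factorization_pow, Finsupp.single_eq_same, Finsupp.inf_apply] at this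
  rw [this]

lemma modEq_one_prime_pow_iff {q ℓ : ℕ} (hq : 2 ≤ q) (hℓ : ℓ.Prime) (c : ℕ) :
    q ≡ 1 [MOD ℓ ^ c] ↔ c ≤ (q - 1).factorization ℓ := by
  rw [Nat.ModEq.comm, Nat.modEq_iff_dvd' (by omega), hℓ.pow_dvd_iff_le_factorization (by omega)]

lemma wHat_prime_pow {q ℓ i k : ℕ} (hq : 2 ≤ q) (hℓ : ℓ.Prime) (hk : k ≠ 0) (hik : i ≤ k)
    (hiv : i ≤ (q - 1).factorization ℓ) :
    wHat q (ℓ ^ i) (ℓ ^ k) = q * psiQ (ℓ ^ (k - i)) * (ℓ : ℚ)⁻¹ ^ (2 * k + i) / (1 - (ℓ : ℚ)⁻¹ ^ 2) *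
      if i < min k ((q - 1).factorization ℓ) then 1 - (ℓ : ℚ)⁻¹ else 1 := by
  have hmin : i ≤ min k ((q - 1).factorization ℓ) := le_min hik hiv
  rw [wHat, gcd_prime_pow_eq_pow_min hℓ (by omega), if_pos (pow_dvd_pow _ hmin),
    Nat.pow_div hik hℓ.pos, Nat.pow_div hmin hℓ.pos, mul_assoc _ (Nat.totient _ : ℚ),
    totient_mul_psiQ_prime_pow hℓ hk]
  split_ifs with hlt
  · rw [Nat.primeFactors_prime_pow (by omega) hℓ, Finset.prod_singleton]
    push_cast
    simp only [inv_pow]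
    field_simp
    ring
  · rw [show min k ((q - 1).factorization ℓ) - i = 0 by omega, pow_zero, Nat.primeFactors_one,
      Finset.prod_empty]
    push_cast
    simp only [inv_pow]
    field_simp
    ring

lemma wHat_prime_pow_of_lt {q ℓ i a : ℕ} (hq : 2 ≤ q) (hℓ : ℓ.Prime)
    (hiv : i < (q - 1).factorization ℓ) (hia : 2 * i < a) :
    wHat q (ℓ ^ i) (ℓ ^ (a - i)) = q * (ℓ : ℚ)⁻¹ ^ (a + i) := by
  have hℓ1 : (1 : ℚ) < ℓ := by exact_mod_cast hℓ.one_lt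
  have hℓsq : (ℓ : ℚ) ^ 2 - 1 ≠ 0 := by nlinarith
  rw [wHat_prime_pow hq hℓ (by omega) (by omega) hiv.le, if_pos (by omega),
    psiQ_prime_pow_s14 hℓ (by omega)]
  obtain ⟨j, rfl⟩ : ∃ j, a = 2 * i + 1 + j := ⟨a - (2 * i + 1), by omega⟩
  rw [show 2 * i + 1 + j - i - i = j + 1 by omega, show 2 * i + 1 + j - i = i + j + 1 by omega]
  simp only [inv_pow]
  field_simp
  ring

lemma wHat_prime_pow_of_eq {q ℓ i a : ℕ} (hq : 2 ≤ q) (hℓ : ℓ.Prime)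
    (hiv : i = (q - 1).factorization ℓ) (hia : 2 * i < a) :
    wHat q (ℓ ^ i) (ℓ ^ (a - i)) = q * (ℓ : ℚ)⁻¹ ^ (a + i) / (1 - (ℓ : ℚ)⁻¹) := by
  have hℓ1 : (1 : ℚ) < ℓ := by exact_mod_cast hℓ.one_lt
  have hℓsub : (ℓ : ℚ) - 1 ≠ 0 := by linarith
  have hℓsq : (ℓ : ℚ) ^ 2 - 1 ≠ 0 := by nlinarith
  rw [wHat_prime_pow hq hℓ (by omega) (by omega) hiv.le, if_neg (by omega),
    psiQ_prime_pow_s14 hℓ (by omega)]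
  obtain ⟨j, rfl⟩ : ∃ j, a = 2 * i + 1 + j := ⟨a - (2 * i + 1), by omega⟩
  rw [show 2 * i + 1 + j - i - i = j + 1 by omega, show 2 * i + 1 + j - i = i + j + 1 by omega]
  simp only [inv_pow]
  field_simp
  ring

lemma wHat_prime_pow_self {q ℓ c : ℕ} (hq : 2 ≤ q) (hℓ : ℓ.Prime) (hc : c ≠ 0)
    (hcv : c ≤ (q - 1).factorization ℓ) :
    wHat q (ℓ ^ c) (ℓ ^ c) = q * (ℓ : ℚ)⁻¹ ^ (3 * c) / (1 - (ℓ : ℚ)⁻¹ ^ 2) := by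
  rw [wHat_prime_pow hq hℓ hc le_rfl hcv, if_neg (by omega), Nat.sub_self, pow_zero]
  simp only [psiQ, Nat.primeFactors_one, Finset.prod_empty]
  ring

lemma vHat_eq_sum_range {q ℓ : ℕ} (hq : 2 ≤ q) (hℓ : ℓ.Prime) (a : ℕ) :
    vHat q ℓ a = ∑ i ∈ Finset.range (min ((a + 1) / 2) ((q - 1).factorization ℓ) + 1),
      wHat q (ℓ ^ i) (ℓ ^ (a - min i (a / 2))) := by
  rw [vHat, gcd_prime_pow_eq_pow_min hℓ (by omega), Nat.sum_divisors_prime_pow hℓ]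
  refine Finset.sum_congr rfl fun i _ => ?_
  rw [gcd_prime_pow_eq_pow_min hℓ (pow_ne_zero _ hℓ.ne_zero), hℓ.factorization_pow,
    Finsupp.single_eq_same, Nat.pow_div (by omega) hℓ.pos]

lemma vHat_eq_geom_sum_add {q ℓ : ℕ} (hq : 2 ≤ q) (hℓ : ℓ.Prime) (a : ℕ) :
    vHat q ℓ a = q * ∑ i ∈ Finset.range (min ((a + 1) / 2) ((q - 1).factorization ℓ)),
        (ℓ : ℚ)⁻¹ ^ (a + i) +
      wHat q (ℓ ^ min ((a + 1) / 2) ((q - 1).factorization ℓ))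
        (ℓ ^ (a - min (min ((a + 1) / 2) ((q - 1).factorization ℓ)) (a / 2))) := by
  rw [vHat_eq_sum_range hq hℓ, Finset.sum_range_succ, Finset.mul_sum]
  congr 1
  refine Finset.sum_congr rfl fun i hi => ?_
  have hi := Finset.mem_range.mp hi
  rw [min_eq_left (by omega : i ≤ a / 2), wHat_prime_pow_of_lt hq hℓ (by omega) (by omega)]

lemma vHat_div_of_factorization_lt {q ℓ a : ℕ} (hq : 2 ≤ q) (hℓ : ℓ.Prime) (ha : 0 < a)
    (hv : (q - 1).factorization ℓ < (a + 1) / 2) :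
    vHat q ℓ a / q = 1 / ((ℓ : ℚ) ^ (a - 1) * ((ℓ : ℚ) - 1)) := by
  have hℓ1 : (1 : ℚ) < ℓ := by exact_mod_cast hℓ.one_lt
  have hℓsub : (ℓ : ℚ) - 1 ≠ 0 := by linarith
  have hsub : 1 - (ℓ : ℚ) ≠ 0 := by linarith
  have hx : (ℓ : ℚ)⁻¹ ≠ 1 := inv_ne_one.mpr (by exact_mod_cast hℓ.ne_one)
  rw [vHat_eq_geom_sum_add hq hℓ, min_eq_right hv.le, min_eq_left (by omega),
    wHat_prime_pow_of_eq hq hℓ rfl (by omega)]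
  generalize (q - 1).factorization ℓ = v
  simp only [pow_add, ← Finset.mul_sum, geom_sum_eq hx v]
  obtain ⟨a, rfl⟩ := Nat.exists_eq_add_one_of_ne_zero ha.ne'
  simp only [inv_pow, Nat.add_sub_cancel]
  field_simp
  ring

lemma vHat_div_of_le_factorization {q ℓ a : ℕ} (hq : 2 ≤ q) (hℓ : ℓ.Prime) (ha : 0 < a)
    (hv : (a + 1) / 2 ≤ (q - 1).factorization ℓ) :
    vHat q ℓ a / q = ((ℓ : ℚ) ^ (a / 2 + 1) + (ℓ : ℚ) ^ (a / 2) - 1) /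
      ((ℓ : ℚ) ^ (a + a / 2 - 1) * ((ℓ : ℚ) ^ 2 - 1)) := by
  have hℓ1 : (1 : ℚ) < ℓ := by exact_mod_cast hℓ.one_lt
  have hsub : 1 - (ℓ : ℚ) ≠ 0 := by linarith
  have hℓsq : (ℓ : ℚ) ^ 2 - 1 ≠ 0 := by nlinarith
  have hx : (ℓ : ℚ)⁻¹ ≠ 1 := inv_ne_one.mpr (by exact_mod_cast hℓ.ne_one)
  rw [vHat_eq_geom_sum_add hq hℓ, min_eq_left hv, min_eq_right (by omega),
    show a - a / 2 = (a + 1) / 2 by omega, wHat_prime_pow_self hq hℓ (by omega) hv]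
  simp only [pow_add, ← Finset.mul_sum, geom_sum_eq hx]
  rcases Nat.even_or_odd' a with ⟨t, rfl | rfl⟩
  · obtain ⟨s, rfl⟩ := Nat.exists_eq_add_one_of_ne_zero (by omega : t ≠ 0)
    rw [show (2 * (s + 1) + 1) / 2 = s + 1 by omega, show 2 * (s + 1) / 2 = s + 1 by omega,
      show 2 * (s + 1) + (s + 1) - 1 = 3 * s + 2 by omega]
    simp only [inv_pow]
    field_simp
    ring
  · rw [show (2 * t + 1 + 1) / 2 = t + 1 by omega, show (2 * t + 1) / 2 = t by omega,
      show 2 * t + 1 + t - 1 = 3 * t by omega]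
    simp only [inv_pow]
    field_simp
    ring

/-- Closed-form evaluation of `v̂(ℓ^a)/q` (equation (10) of Howe's paper):
it is `1/(ℓ^{a-1}(ℓ-1))` if `q ≢ 1 mod ℓ^c`, and
`(ℓ^{b+1}+ℓ^b-1)/(ℓ^{a+b-1}(ℓ²-1))` if `q ≡ 1 mod ℓ^c`, where `b = ⌊a/2⌋`, `c = ⌈a/2⌉`. -/
theorem vHat_eval (q : ℕ) (hq : 2 ≤ q) (ℓ : ℕ) (hℓ : ℓ.Prime) (a : ℕ) (ha : 0 < a) :
    (¬ q ≡ 1 [MOD ℓ ^ ((a + 1) / 2)] →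
      vHat q ℓ a / q = 1 / ((ℓ : ℚ) ^ (a - 1) * ((ℓ : ℚ) - 1))) ∧
    (q ≡ 1 [MOD ℓ ^ ((a + 1) / 2)] →
      vHat q ℓ a / q = ((ℓ : ℚ) ^ (a / 2 + 1) + (ℓ : ℚ) ^ (a / 2) - 1) /
        ((ℓ : ℚ) ^ (a + a / 2 - 1) * ((ℓ : ℚ) ^ 2 - 1))) := by
  rw [modEq_one_prime_pow_iff hq hℓ]
  exact ⟨fun h => vHat_div_of_factorization_lt hq hℓ ha (not_le.mp h),
    vHat_div_of_le_factorization hq hℓ ha⟩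
end
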